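/- arXiv:1504.00161 — 3 statements merged into one kernel-verified Lean document; each statement's English description precedes it below -/
import Mathlib

section
/- Let A be the adjacency matrix of a DSRG with parameters (n,k,t,λ,μ) respecting a homogeneous partition π with a cells of size b (ab = n). Suppose the π-join M₁(A) (the (a+1)×(a+1) block-circulant matrix with first block-row (A, U₁, U₂, …, U_a)) is the adjacency matrix of a DSRG with parameters (ñ,k̃,t̃,λ̃,μ̃). Then ñ = (a+1)n, k̃ = n+k, t̃ = b+t, λ̃ = b+λ, and μ̃ = b+μ. -/
open Matrix

/-- The all-ones matrix. -/
def onesMat (n : ℕ) : Matrix (Fin n) (Fin n) ℝ := Matrix.of fun _ _ => 1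

/-- The all-ones matrix indexed by blocks. -/
def Jbig (N n : ℕ) : Matrix (Fin N × Fin n) (Fin N × Fin n) ℝ := Matrix.of fun _ _ => 1

/-- `Ublk a b i`: columns in the `i`-th cell are all-ones, other entries zero. -/
def Ublk (a b : ℕ) (i : ℕ) : Matrix (Fin (a * b)) (Fin (a * b)) ℝ :=
  Matrix.of fun _ c => if (c : ℕ) / b = i then 1 else 0

/-- The π-join of `A` in power `j`: the block-circulant matrix of block order
`j*a+1` whose first block-row is `(A, U₁,…,U₁, U₂,…,U₂, …, U_a,…,U_a)`,
each `Uᵢ` repeated `j` times. -/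
def Mjoin (a b j : ℕ) (A : Matrix (Fin (a * b)) (Fin (a * b)) ℝ) :
    Matrix (Fin (j * a + 1) × Fin (a * b)) (Fin (j * a + 1) × Fin (a * b)) ℝ :=
  fun p q =>
    if q.1 - p.1 = 0 then A p.2 q.2
    else Ublk a b ((((q.1 - p.1 : Fin (j * a + 1)) : ℕ) - 1) / j) p.2 q.2


/-!
The `(0,0)` block of `M₁(A)²` is `A² + ∑ᵢ UᵢU_{a+1-i} = A² + bJ`, since `UᵢUⱼ = bUⱼ` and the
`Uⱼ` sum to `J`. Comparing the `(0,0)` blocks of the two DSRG equations therefore gives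
`(t+b)I + (λ+b)A + (μ+b)(J-I-A) = t̃I + λ̃A + μ̃(J-I-A)`, and since `I`, `A`, `J-I-A` are nonzero
with disjoint supports the coefficients agree. Row sums of the first block-row give `k̃ = k + n`.
-/

section Ublk

variable {a b : ℕ}

lemma sum_Ublk_apply {i : ℕ} (hi : i < a) (x : Fin (a * b)) :
    ∑ y, Ublk a b i x y = b := by
  rw [← finProdFinEquiv.sum_comp, Fintype.sum_prod_type]
  have hcell (p : Fin a) (q : Fin b) : (finProdFinEquiv (p, q) : ℕ) / b = p := by
    rw [finProdFinEquiv_apply_val, Nat.add_mul_div_left _ _ q.pos, Nat.div_eq_of_lt q.isLt,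
      zero_add]
  simp only [Ublk, of_apply, hcell, Finset.sum_const, Finset.card_univ, Fintype.card_fin,
    nsmul_eq_mul, mul_ite, mul_one, mul_zero]
  rw [Fin.sum_univ_eq_sum_range (fun p => if p = i then (b : ℝ) else 0),
    Finset.sum_ite_eq' _ _ (fun _ => (b : ℝ)), if_pos (Finset.mem_range.2 hi)]

lemma Ublk_mul_Ublk {i : ℕ} (hi : i < a) (j : ℕ) :
    Ublk a b i * Ublk a b j = (b : ℝ) • Ublk a b j := by
  ext x y
  have hcol (z : Fin (a * b)) :
      Ublk a b i x z * Ublk a b j z y = Ublk a b i x z * Ublk a b j x y := rfl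
  rw [mul_apply, Finset.sum_congr rfl fun z _ => hcol z, ← Finset.sum_mul, sum_Ublk_apply hi,
    Matrix.smul_apply, smul_eq_mul]

lemma sum_range_Ublk : ∑ i ∈ Finset.range a, Ublk a b i = of fun _ _ => 1 := by
  ext x y
  have hy : (y : ℕ) / b < a := Nat.div_lt_of_lt_mul (by simp [mul_comm])
  simp [Matrix.sum_apply, Ublk, Finset.sum_ite_eq, hy]

end Ublk

section Mjoin

variable {a b : ℕ} (A : Matrix (Fin (a * b)) (Fin (a * b)) ℝ)

lemma Mjoin_one_zero_zero (x y : Fin (a * b)) : Mjoin a b 1 A (0, x) (0, y) = A x y := by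
  simp [Mjoin]

lemma Mjoin_one_zero_succ (i : Fin (1 * a)) (x y : Fin (a * b)) :
    Mjoin a b 1 A (0, x) (i.succ, y) = Ublk a b i x y := by
  simp [Mjoin, Fin.succ_ne_zero]

lemma Mjoin_one_succ_zero (i : Fin (1 * a)) (x y : Fin (a * b)) :
    Mjoin a b 1 A (i.succ, x) (0, y) = Ublk a b (a - 1 - i) x y := by
  have hval : (((0 : Fin (1 * a + 1)) - i.succ : Fin (1 * a + 1)) : ℕ) = a - i := by
    rw [Fin.sub_def]; simp
  have hne : (0 : Fin (1 * a + 1)) - i.succ ≠ 0 := by simp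
  simp only [Mjoin, if_neg hne, hval, Nat.div_one, Nat.sub_right_comm]

lemma submatrix_zero_Mjoin_one : (Mjoin a b 1 A).submatrix (Prod.mk 0) (Prod.mk 0) = A := by
  ext x y
  exact Mjoin_one_zero_zero A x y

lemma sum_Mjoin_one_zero_apply (x : Fin (a * b)) :
    ∑ r, Mjoin a b 1 A (0, x) r = ∑ y, A x y + (a * b : ℕ) := by
  have hcell (i : Fin (1 * a)) : ∑ y, Ublk a b i x y = b :=
    sum_Ublk_apply (by simpa using i.isLt) x
  simp only [Fintype.sum_prod_type, Fin.sum_univ_succ, Mjoin_one_zero_zero, Mjoin_one_zero_succ,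
    hcell, Finset.sum_const, Finset.card_univ, Fintype.card_fin, nsmul_eq_mul]
  push_cast
  ring

lemma submatrix_zero_Mjoin_one_mul_self :
    (Mjoin a b 1 A * Mjoin a b 1 A).submatrix (Prod.mk 0) (Prod.mk 0)
      = A * A + (b : ℝ) • of fun _ _ => 1 := by
  have hUU :
      ∑ i : Fin (1 * a), Ublk a b i * Ublk a b (a - 1 - i) = (b : ℝ) • of fun _ _ => 1 := by
    rw [Finset.sum_congr rfl fun i _ => Ublk_mul_Ublk (by simpa using i.isLt) _, ← Finset.smul_sum,
      Fin.sum_univ_eq_sum_range (fun i => Ublk a b (a - 1 - i)), one_mul,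
      Finset.sum_range_reflect (Ublk a b), sum_range_Ublk]
  ext x y
  rw [submatrix_apply, mul_apply, Fintype.sum_prod_type, Fin.sum_univ_succ, Matrix.add_apply,
    ← hUU]
  simp only [Mjoin_one_zero_zero, Mjoin_one_succ_zero, Mjoin_one_zero_succ, Matrix.sum_apply,
    mul_apply]

end Mjoin

section Coefficients

variable {ι R : Type*} [DecidableEq ι] [Ring R] {A : Matrix ι ι R}

lemma eq_of_smul_one_add_smul_add_smul_compl_eq {α β γ α' β' γ' : R} {x u v p q : ι}
    (hx : A x x = 0) (huv : u ≠ v) (hAuv : A u v = 1) (hpq : p ≠ q) (hApq : A p q = 0)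
    (h : α • 1 + β • A + γ • (of (fun _ _ => 1) - 1 - A)
      = α' • 1 + β' • A + γ' • (of (fun _ _ => 1) - 1 - A)) :
    α = α' ∧ β = β' ∧ γ = γ' := by
  have hentry (i j : ι) := congrFun (congrFun h i) j
  refine ⟨?_, ?_, ?_⟩
  · simpa [hx] using hentry x x
  · simpa [huv, hAuv] using hentry u v
  · simpa [hpq, hApq] using hentry p q

lemma exists_ne_apply_eq_zero_of_mul_self_apply_ne [Fintype ι]
    (h01 : ∀ i j, A i j = 0 ∨ A i j = 1) (hdiag : ∀ i, A i i = 0) {x : ι}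
    (hx : (A * A) x x ≠ ∑ y, A x y) : ∃ p q, p ≠ q ∧ A p q = 0 := by
  by_contra! hall
  have hone (i j : ι) (hij : i ≠ j) : A i j = 1 := (h01 i j).resolve_left (hall i j hij)
  refine hx (Finset.sum_congr rfl fun y _ => ?_)
  by_cases hy : y = x
  · simp [hy, hdiag]
  · change A x y * A y x = A x y
    rw [hone y x hy, mul_one]

end Coefficients

theorem pijoin_parameters_general (a b k t l m : ℕ) (ha : 0 < a) (hb : 0 < b)
    (A : Matrix (Fin (a * b)) (Fin (a * b)) ℝ)
    (h01 : ∀ i j, A i j = 0 ∨ A i j = 1)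
    (hdiag : ∀ i, A i i = 0)
    (hAJ : A * onesMat (a * b) = (k : ℝ) • onesMat (a * b))
    (hA2 : A * A = (t : ℝ) • (1 : Matrix (Fin (a * b)) (Fin (a * b)) ℝ) + (l : ℝ) • A
            + (m : ℝ) • (onesMat (a * b) - 1 - A))
    (htk : t < k)
    (ntil ktil ttil ltil mtil : ℕ)
    (hcard : ntil = Fintype.card (Fin (1 * a + 1) × Fin (a * b)))
    (hMJ : Mjoin a b 1 A * Jbig (1 * a + 1) (a * b)
            = (ktil : ℝ) • Jbig (1 * a + 1) (a * b))
    (hM2 : Mjoin a b 1 A * Mjoin a b 1 A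
            = (ttil : ℝ) • (1 : Matrix (Fin (1 * a + 1) × Fin (a * b))
                (Fin (1 * a + 1) × Fin (a * b)) ℝ)
              + (ltil : ℝ) • Mjoin a b 1 A
              + (mtil : ℝ) • (Jbig (1 * a + 1) (a * b) - 1 - Mjoin a b 1 A)) :
    ntil = (a + 1) * (a * b) ∧ ktil = a * b + k ∧ ttil = b + t ∧
      ltil = b + l ∧ mtil = b + m := by
  let x₀ : Fin (a * b) := ⟨0, Nat.mul_pos ha hb⟩
  have hrow : ∑ y, A x₀ y = k := by
    simpa [onesMat, mul_apply] using congrFun (congrFun hAJ x₀) x₀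
  have hAA : (A * A) x₀ x₀ = t := by
    simpa [onesMat, hdiag] using congrFun (congrFun hA2 x₀) x₀
  have hktil : ∑ y, A x₀ y + (a * b : ℕ) = ktil := by
    simpa [Jbig, mul_apply, sum_Mjoin_one_zero_apply] using
      congrFun (congrFun hMJ (0, x₀)) (0, x₀)
  have hblock : (t + b : ℝ) • 1 + (l + b : ℝ) • A + (m + b : ℝ) • (onesMat (a * b) - 1 - A)
      = (ttil : ℝ) • 1 + (ltil : ℝ) • A + (mtil : ℝ) • (onesMat (a * b) - 1 - A) := by
    let ι₀ : Fin (a * b) → Fin (1 * a + 1) × Fin (a * b) := Prod.mk 0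
    have hJ : (Jbig (1 * a + 1) (a * b)).submatrix ι₀ ι₀ = onesMat (a * b) := rfl
    have h := congrArg (fun N => N.submatrix ι₀ ι₀) hM2
    simp only [ι₀, submatrix_zero_Mjoin_one_mul_self, submatrix_add, submatrix_smul, submatrix_sub,
      Pi.add_apply, Pi.smul_apply, Pi.sub_apply, submatrix_one _ (Prod.mk_right_injective _),
      submatrix_zero_Mjoin_one, hJ, hA2] at h
    rw [← h]
    unfold onesMat
    module
  -- `k ≠ 0` gives a `1` in row `x₀`, and `k ≠ t` rules out `A = J - I`
  obtain ⟨v, -, hv⟩ := Finset.exists_ne_zero_of_sum_ne_zero (s := Finset.univ) (f := A x₀)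
    (by rw [hrow]; exact_mod_cast (by omega : k ≠ 0))
  obtain ⟨p, q, hpq, hApq⟩ := exists_ne_apply_eq_zero_of_mul_self_apply_ne h01 hdiag (x := x₀)
    (by rw [hAA, hrow]; exact_mod_cast htk.ne)
  obtain ⟨ht, hl, hm⟩ := eq_of_smul_one_add_smul_add_smul_compl_eq (hdiag x₀)
    (fun h => hv (by rw [← h]; exact hdiag x₀)) ((h01 x₀ v).resolve_left hv) hpq hApq hblock
  refine ⟨by simp [hcard], ?_, ?_, ?_, ?_⟩
  · rw [hrow] at hktil; exact_mod_cast (by linarith : (ktil : ℝ) = (a * b : ℕ) + k)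
  · exact_mod_cast (by linarith : (ttil : ℝ) = b + t)
  · exact_mod_cast (by linarith : (ltil : ℝ) = b + l)
  · exact_mod_cast (by linarith : (mtil : ℝ) = b + m)

/-- If the π-join `M₁(A)` of a DSRG is a DSRG with parameters `(ñ,k̃,t̃,λ̃,μ̃)`,
then `ñ = (a+1)n`, `k̃ = n+k`, `t̃ = b+t`, `λ̃ = b+λ`, `μ̃ = b+μ`. -/
theorem pijoin_parameters (a b k t l m : ℕ) (ha : 0 < a) (hb : 0 < b)
    (A : Matrix (Fin (a * b)) (Fin (a * b)) ℝ)
    (h01 : ∀ i j, A i j = 0 ∨ A i j = 1)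
    (hdiag : ∀ i, A i i = 0)
    (hAJ : A * onesMat (a * b) = (k : ℝ) • onesMat (a * b))
    (hJA : onesMat (a * b) * A = (k : ℝ) • onesMat (a * b))
    (hA2 : A * A = (t : ℝ) • (1 : Matrix (Fin (a * b)) (Fin (a * b)) ℝ) + (l : ℝ) • A
            + (m : ℝ) • (onesMat (a * b) - 1 - A))
    (hlt : l < t) (htk : t < k) (hm0 : 0 < m) (hmt : m ≤ t)
    (ntil ktil ttil ltil mtil : ℕ)
    (hcard : ntil = Fintype.card (Fin (1 * a + 1) × Fin (a * b)))
    (hMJ : Mjoin a b 1 A * Jbig (1 * a + 1) (a * b)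
            = (ktil : ℝ) • Jbig (1 * a + 1) (a * b))
    (hJM : Jbig (1 * a + 1) (a * b) * Mjoin a b 1 A
            = (ktil : ℝ) • Jbig (1 * a + 1) (a * b))
    (hM2 : Mjoin a b 1 A * Mjoin a b 1 A
            = (ttil : ℝ) • (1 : Matrix (Fin (1 * a + 1) × Fin (a * b))
                (Fin (1 * a + 1) × Fin (a * b)) ℝ)
              + (ltil : ℝ) • Mjoin a b 1 A
              + (mtil : ℝ) • (Jbig (1 * a + 1) (a * b) - 1 - Mjoin a b 1 A))
    (hlttil : ltil < ttil) (htktil : ttil < ktil) (hm0til : 0 < mtil) (hmttil : mtil ≤ ttil) :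
    ntil = (a + 1) * (a * b) ∧ ktil = a * b + k ∧ ttil = b + t ∧
      ltil = b + l ∧ mtil = b + m :=
  pijoin_parameters_general a b k t l m ha hb A h01 hdiag hAJ hA2 htk ntil ktil ttil ltil mtil hcard
    hMJ hM2
end

section
/- In J\u00f8rgensen's DSRG with parameters ((k²−1)/μ, k, μ+1, μ, μ) — vertex set ℤ_n with n = (k²−1)/μ and a dart from x to y iff x + ky ∈ {1,…,k} (mod n) — assume μ ∈ {1,2} and μ ∣ k−1, and let a = (k+1)/μ. Then the residue classes C_i = {s : s ≡ i (mod a)}, i = 0,…,a−1, form a column-equitable partition: every vertex y has exactly μ−1 inneighbours in its own class and exactly μ inneighbours in each other class. -/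
/-!
The inneighbours of `y` are the `k` vertices `s - k y`, `1 ≤ s ≤ k`, which are distinct because
`n = (k - 1) a ≥ μ a = k + 1` (as `μ ∣ k - 1`). Since `a ∣ n` and `k ≡ -1 (mod a)`, the residue
of `s - k y` modulo `a` is that of `s + y`, so counting inneighbours in class `i` is counting
`s ∈ [1, μ a - 1]` with `s ≡ i - y (mod a)`: there are `μ` of them, except `μ - 1` when `i ≡ y`,
where `s = 0` is missing.
-/

/-- Jørgensen's DSRG has vertex set `ZMod n`, `n = (k²−1)/μ`, with a dart from
`x` to `y` iff `x + ky ∈ {1,…,k} (mod n)`. -/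
def jorgensenDart (n k : ℕ) (x y : ZMod n) : Prop :=
  ∃ s : ℕ, 1 ≤ s ∧ s ≤ k ∧ x + (k : ZMod n) * y = (s : ZMod n)

open Finset

lemma card_filter_range_mul_natCast_eq (a m : ℕ) [NeZero a] (c : ZMod a) :
    #{s ∈ range (m * a) | ((s : ℕ) : ZMod a) = c} = m := by
  have h := Nat.count_modEq_card (m * a) (NeZero.pos a) c.val
  simp only [Nat.mul_mod_left, Nat.not_lt_zero, if_false, add_zero,
    Nat.mul_div_cancel _ (NeZero.pos a), Nat.count_eq_card_filter_range] at h
  simpa only [← ZMod.natCast_eq_natCast_iff, ZMod.natCast_zmod_val] using h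

lemma card_filter_Icc_natCast_eq {a m k : ℕ} [NeZero a] (hk : k + 1 = m * a) (c : ZMod a) :
    #{s ∈ Icc 1 k | ((s : ℕ) : ZMod a) = c} = if c = 0 then m - 1 else m := by
  have hIcc : Icc 1 k = (range (m * a)).erase 0 := by
    ext s
    simp only [mem_Icc, mem_erase, mem_range]
    omega
  rw [hIcc, filter_erase, card_erase_eq_ite, card_filter_range_mul_natCast_eq]
  simp only [mem_filter, mem_range, ← hk, Nat.zero_lt_succ, true_and, Nat.cast_zero, eq_comm]

lemma ncard_setOf_jorgensenDart_and {n k : ℕ} (hkn : k < n) (y : ZMod n) (p : ZMod n → Prop)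
    [DecidablePred p] :
    {x | jorgensenDart n k x y ∧ p x}.ncard = #{s ∈ Icc 1 k | p ((s : ℕ) - k * y)} := by
  have hset : {x | jorgensenDart n k x y ∧ p x}
      = ({s ∈ Icc 1 k | p ((s : ℕ) - k * y)}.image fun s : ℕ ↦ (s : ZMod n) - k * y :) := by
    ext x
    simp only [jorgensenDart, Set.mem_ofPred_eq, coe_image, coe_filter, mem_Icc, Set.mem_image]
    constructor
    · rintro ⟨⟨s, hs1, hsk, hx⟩, hp⟩
      obtain rfl : x = s - k * y := eq_sub_of_add_eq hx
      exact ⟨s, ⟨⟨hs1, hsk⟩, hp⟩, rfl⟩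
    · rintro ⟨s, ⟨⟨hs1, hsk⟩, hp⟩, rfl⟩
      exact ⟨⟨s, hs1, hsk, sub_add_cancel _ _⟩, hp⟩
  rw [hset, Set.ncard_coe_finset, card_image_of_injOn]
  intro s hs t ht hst
  simp only [coe_filter, mem_Icc, Set.mem_ofPred_eq, sub_left_inj,
    ZMod.natCast_eq_natCast_iff'] at hs ht hst
  rwa [Nat.mod_eq_of_lt (by omega), Nat.mod_eq_of_lt (by omega)] at hst

lemma val_mod_eq_iff_castHom_eq {a n : ℕ} [NeZero n] (h : a ∣ n) (x : ZMod n) {i : ℕ}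
    (hi : i < a) : x.val % a = i ↔ ZMod.castHom h (ZMod a) x = i := by
  rw [ZMod.castHom_apply, ZMod.cast_eq_val, ZMod.natCast_eq_natCast_iff', Nat.mod_eq_of_lt hi]

section Parameters

variable {n k mu a : ℕ}

lemma jorgensen_order_eq (hn : mu * n = k ^ 2 - 1) (ha : mu * a = k + 1) : n = (k - 1) * a := by
  have hmu : mu ≠ 0 := by rintro rfl; omega
  refine Nat.eq_of_mul_eq_mul_left (Nat.pos_of_ne_zero hmu) ?_
  rw [hn, Nat.mul_left_comm, ha, mul_comm, ← Nat.sq_sub_sq, one_pow]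

lemma jorgensen_degree_lt_order [NeZero n] (hdvd : mu ∣ k - 1) (hn : mu * n = k ^ 2 - 1)
    (ha : mu * a = k + 1) : k < n := by
  have hna := jorgensen_order_eq hn ha
  have hk : k - 1 ≠ 0 := by rintro h; exact NeZero.ne n (by rw [hna, h, zero_mul])
  calc k < mu * a := by omega
    _ ≤ (k - 1) * a := Nat.mul_le_mul_right a (Nat.le_of_dvd (Nat.pos_of_ne_zero hk) hdvd)
    _ = n := hna.symm

lemma jorgensen_degree_eq_neg_one (ha : mu * a = k + 1) : (k : ZMod a) = -1 := by
  refine eq_neg_of_add_eq_zero_left ?_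
  rw [← Nat.cast_one, ← Nat.cast_add, ← ha, Nat.cast_mul, ZMod.natCast_self, mul_zero]

end Parameters

theorem jorgensen_residue_partition_general (n k mu a : ℕ) [NeZero n]
    (hdvd : mu ∣ k - 1)
    (hn : mu * n = k ^ 2 - 1) (ha : mu * a = k + 1) :
    ∀ y : ZMod n, ∀ i : ℕ, i < a →
      {x : ZMod n | jorgensenDart n k x y ∧ x.val % a = i}.ncard
        = if i = y.val % a then mu - 1 else mu := by
  intro y i hi
  have han : a ∣ n := Dvd.intro_left _ (jorgensen_order_eq hn ha).symm
  have : NeZero a := ⟨by rintro rfl; omega⟩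
  have hclass (x : ZMod n) := val_mod_eq_iff_castHom_eq han x hi
  rw [ncard_setOf_jorgensenDart_and (jorgensen_degree_lt_order hdvd hn ha)]
  simp_rw [hclass, map_sub, map_mul, map_natCast, jorgensen_degree_eq_neg_one ha, neg_one_mul,
    sub_neg_eq_add, ← eq_sub_iff_add_eq]
  rw [card_filter_Icc_natCast_eq ha.symm]
  refine if_congr ?_ rfl rfl
  rw [sub_eq_zero, eq_comm (a := (i : ZMod a)), ← hclass, eq_comm]

/-- In Jørgensen's DSRG with parameters `((k²−1)/μ, k, μ+1, μ, μ)`, for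
`μ ∈ {1,2}` and `a = (k+1)/μ`, the residue classes modulo `a` form a
column-equitable partition: every vertex has exactly `μ−1` inneighbours in its
own class and exactly `μ` inneighbours in each other class. -/
theorem jorgensen_residue_partition (n k mu a : ℕ) [NeZero n]
    (hk : 1 ≤ k) (hdvd : mu ∣ k - 1) (hmu : mu = 1 ∨ mu = 2)
    (hn : mu * n = k ^ 2 - 1) (ha : mu * a = k + 1) :
    ∀ y : ZMod n, ∀ i : ℕ, i < a →
      {x : ZMod n | jorgensenDart n k x y ∧ x.val % a = i}.ncard
        = if i = y.val % a then mu - 1 else mu :=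
  jorgensen_residue_partition_general n k mu a hdvd hn ha
end

section
/- In J\u00f8rgensen's DSRG on ℤ_n, n = (k²−1)/μ (with μ ∣ k−1, dart x → y iff x + ky ∈ {1,…,k} mod n), set a = (k−1)/μ and b = k+1. The sets C_i = {bi} ∪ {k(s − bi) mod n : s ∈ {1,…,k}} for i = 0,…,a−1 partition ℤ_n into a cells of size b, and this partition is column-equitable with quotient matrix Q = (μ+1)I + μ(J − I): every vertex has exactly μ+1 inneighbours in its own cell and exactly μ inneighbours in each other cell. -/
/-- The cell `C_i = {bi} ∪ {k(s − bi) : s ∈ {1,…,k}}` (the vertex `bi`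
together with its outneighbours). -/
def jorgensenCell (n k b : ℕ) (i : ℕ) : Set (ZMod n) :=
  {((b * i : ℕ) : ZMod n)} ∪
    {v | ∃ s : ℕ, 1 ≤ s ∧ s ≤ k ∧ v = (k : ZMod n) * ((s : ZMod n) - ((b * i : ℕ) : ZMod n))}

lemma jorg_count_mod (n mu v : ℕ) (hv : v < n) :
    ((Finset.range (mu*n+1)).filter (fun r => r % n = v)).card
      = mu + if v = 0 then 1 else 0 := by
  classical
  induction mu with
  | zero =>
    rw [zero_mul, zero_add, Finset.range_one, Finset.filter_singleton]
    rcases eq_or_ne v 0 with h | h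
    · subst h; simp
    · simp [Nat.zero_mod, Ne.symm h, h]
  | succ m ih =>
    have hM : (m+1)*n+1 = (m*n+1) + n := by ring
    have hsplit : Finset.range ((m+1)*n+1)
        = Finset.range (m*n+1) ∪ Finset.Ico (m*n+1) ((m*n+1)+n) := by
      rw [hM, Finset.range_eq_Ico, Finset.range_eq_Ico]
      exact (Finset.Ico_union_Ico_eq_Ico (Nat.zero_le _) (Nat.le_add_right _ _)).symm
    rw [hsplit, Finset.filter_union, Finset.card_union_of_disjoint, ih]
    · set v' := if v = 0 then n else v with hv'def
      have hn : 0 < n := by omega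
      have hv'1 : 1 ≤ v' := by rw [hv'def]; split <;> omega
      have hv'2 : v' ≤ n := by rw [hv'def]; split <;> omega
      have hv'mod : v' % n = v := by
        rw [hv'def]; split
        · rw [Nat.mod_self]; omega
        · exact Nat.mod_eq_of_lt hv
      have hmodgen : ∀ x : ℕ, (m*n + x) % n = x % n := by
        intro x; rw [Nat.add_comm, Nat.add_mul_mod_self_right]
      have hone : (Finset.filter (fun r => r % n = v) (Finset.Ico (m*n+1) ((m*n+1)+n)))
          = {m*n + v'} := by
        apply Finset.eq_singleton_iff_unique_mem.2
        constructor
        · simp only [Finset.mem_filter, Finset.mem_Ico]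
          exact ⟨⟨by omega, by omega⟩, by rw [hmodgen, hv'mod]⟩
        · intro y hy
          simp only [Finset.mem_filter, Finset.mem_Ico] at hy
          obtain ⟨⟨h1, h2⟩, h3⟩ := hy
          have hu : y = m*n + (y - m*n) := by omega
          have hmod : y % n = (y - m*n) % n := by
            conv_lhs => rw [hu]
            rw [hmodgen]
          set u := y - m*n with hudef
          have hu1 : 1 ≤ u := by omega
          have hu2 : u ≤ n := by omega
          have huv : u = v' := by
            rcases eq_or_lt_of_le hu2 with h | h
            · have h0 : v = 0 := by
                rw [← h3, hmod, h, Nat.mod_self]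
              rw [hv'def, if_pos h0]; omega
            · have h0 : v = u := by rw [← h3, hmod, Nat.mod_eq_of_lt h]
              rw [hv'def, if_neg (by omega)]; omega
          omega
      rw [hone, Finset.card_singleton]
      split <;> ring
    · apply Finset.disjoint_filter_filter
      rw [Finset.range_eq_Ico]
      exact Finset.Ico_disjoint_Ico_consecutive _ _ _

open scoped Classical in
lemma jorg_lemF (n k mu : ℕ) [NeZero n] (hk : 1 ≤ k) (hkn : k < n)
    (hsq : mu * n + 1 = k * k) (c : ZMod n) :
    ((Finset.Icc 1 k).filter (fun s : ℕ => ∃ t : ℕ, 1 ≤ t ∧ t ≤ k ∧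
        (t : ZMod n) = (k:ZMod n)*(s:ZMod n) + c)).card
      = mu + if c = 0 then 1 else 0 := by
  classical
  have hn0 : 0 < n := by omega
  have key : ((Finset.Icc 1 k).filter (fun s : ℕ => ∃ t : ℕ, 1 ≤ t ∧ t ≤ k ∧
        (t : ZMod n) = (k:ZMod n)*(s:ZMod n) + c)).card
      = ((Finset.range (mu*n+1)).filter (fun r : ℕ => ((r:ℕ) : ZMod n) = -c)).card := by
    apply Finset.card_nbij' (i := fun s : ℕ => k*s - ((k:ZMod n)*(s:ZMod n) + c).val)
      (j := fun r : ℕ => r/k + 1)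
    · intro s hs
      simp only [Finset.mem_coe, Finset.mem_filter, Finset.mem_Icc] at hs
      obtain ⟨⟨hs1, hs2⟩, t, ht1, ht2, ht3⟩ := hs
      have hw : ((k:ZMod n)*(s:ZMod n) + c).val = t := by
        rw [← ht3, ZMod.val_natCast_of_lt (by omega)]
      beta_reduce
      rw [hw]
      simp only [Finset.mem_coe, Finset.mem_filter, Finset.mem_range]
      have hks : k*s ≤ k*k := Nat.mul_le_mul_left k hs2
      have htks : t ≤ k*s := by
        have h5 : k*1 ≤ k*s := Nat.mul_le_mul_left k hs1
        omega
      refine ⟨by omega, ?_⟩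
      rw [Nat.cast_sub htks, ht3]
      push_cast
      ring
    · intro r hr
      simp only [Finset.mem_coe, Finset.mem_filter, Finset.mem_range] at hr
      obtain ⟨hr1, hr2⟩ := hr
      have hrk : r / k < k := Nat.div_lt_of_lt_mul (by omega : r < k * k)
      have hdm := Nat.div_add_mod r k
      have h1 : r % k < k := Nat.mod_lt r (by omega)
      have h2 : k*(r/k+1) = k*(r/k) + k := by ring
      have hrle : r ≤ k*(r/k+1) := by omega
      have hA : 1 ≤ r/k + 1 := Nat.le_add_left 1 _
      have hB : r/k + 1 ≤ k := by omega
      have hC : 1 ≤ k*(r/k+1) - r := by omega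
      have hD : k*(r/k+1) - r ≤ k := by omega
      simp only [Finset.mem_coe, Finset.mem_filter, Finset.mem_Icc]
      refine ⟨⟨hA, hB⟩, k*(r/k+1) - r, hC, hD, ?_⟩
      rw [Nat.cast_sub hrle, hr2]
      push_cast
      ring
    · intro s hs
      simp only [Finset.mem_coe, Finset.mem_filter, Finset.mem_Icc] at hs
      obtain ⟨⟨hs1, hs2⟩, t, ht1, ht2, ht3⟩ := hs
      have hw : ((k:ZMod n)*(s:ZMod n) + c).val = t := by
        rw [← ht3, ZMod.val_natCast_of_lt (by omega)]
      beta_reduce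
      rw [hw]
      obtain ⟨s', rfl⟩ : ∃ s', s = s' + 1 := ⟨s-1, by omega⟩
      have h2 : k*(s'+1) = k*s' + k := by ring
      have h3 : k*(s'+1) - t = k*s' + (k - t) := by omega
      rw [h3, Nat.mul_add_div (by omega), Nat.div_eq_of_lt (by omega)]
    · intro r hr
      simp only [Finset.mem_coe, Finset.mem_filter, Finset.mem_range] at hr
      obtain ⟨hr1, hr2⟩ := hr
      have h2 : k*(r/k+1) = k*(r/k) + k := by ring
      have hdm := Nat.div_add_mod r k
      have h1 : r % k < k := Nat.mod_lt r (by omega)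
      have hrle : r ≤ k*(r/k+1) := by omega
      have htv : (((k*(r/k+1) - r : ℕ)) : ZMod n) = (k:ZMod n)*((r/k+1 : ℕ):ZMod n) + c := by
        rw [Nat.cast_sub hrle, hr2]
        push_cast
        ring
      have hw : ((k:ZMod n)*(((r/k+1 : ℕ)):ZMod n) + c).val = k*(r/k+1) - r := by
        rw [← htv, ZMod.val_natCast_of_lt (by omega)]
      beta_reduce
      rw [hw]
      omega
  rw [key]
  have heq2 : Finset.filter (fun r : ℕ => ((r:ℕ) : ZMod n) = -c) (Finset.range (mu*n+1))
      = Finset.filter (fun r : ℕ => r % n = (-c).val) (Finset.range (mu*n+1)) := by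
    apply Finset.filter_congr
    intro r _
    have h1 : ((r:ℕ) : ZMod n) = -c ↔ ((r : ZMod n)).val = (-c).val :=
      ⟨fun h => by rw [h], fun h => ZMod.val_injective n h⟩
    rw [h1, ZMod.val_natCast]
  rw [heq2, jorg_count_mod n mu _ (ZMod.val_lt _)]
  rcases eq_or_ne c 0 with hc | hc
  · rw [if_pos hc, if_pos (by rw [hc, neg_zero, ZMod.val_zero])]
  · rw [if_neg hc, if_neg (fun h => hc (by rwa [ZMod.val_eq_zero, neg_eq_zero] at h))]

/-- In Jørgensen's DSRG with parameters `((k²−1)/μ, k, μ+1, μ, μ)`, for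
`a = (k−1)/μ` and `b = k+1`, the sets `C_i = {bi} ∪ {k(s−bi) : 1 ≤ s ≤ k}`,
`i = 0,…,a−1`, partition `ZMod n` into `a` cells of size `b`, and this
partition is column-equitable with quotient matrix `(μ+1)I + μ(J−I)`: every
vertex has exactly `μ+1` inneighbours in its own cell and exactly `μ`
inneighbours in each other cell. -/
theorem jorgensen_outneighbour_partition (n k mu a b : ℕ) [NeZero n]
    (hk : 1 ≤ k) (hdvd : mu ∣ k - 1) (hmupos : 0 < mu)
    (hn : mu * n = k ^ 2 - 1) (ha : mu * a = k - 1) (hb : b = k + 1) :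
    (∀ v : ZMod n, ∃! i : ℕ, i < a ∧ v ∈ jorgensenCell n k b i) ∧
    (∀ i : ℕ, i < a → (jorgensenCell n k b i).ncard = b) ∧
    (∀ i j : ℕ, i < a → j < a → ∀ v ∈ jorgensenCell n k b j,
      {x : ZMod n | x ∈ jorgensenCell n k b i ∧ jorgensenDart n k x v}.ncard
        = if i = j then mu + 1 else mu) := by
  classical
  have hnne : n ≠ 0 := NeZero.ne n
  -- basic numerics
  have hk2 : 2 ≤ k := by
    by_contra h
    have hk1 : k = 1 := by omega
    subst hk1
    simp only [one_pow] at hn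
    have : mu * n = 0 := by omega
    rcases Nat.mul_eq_zero.1 this with h' | h' <;> omega
  have hsq : mu * n + 1 = k * k := by
    rw [pow_two] at hn
    have h1 : 1*1 ≤ k*k := Nat.mul_le_mul hk hk
    omega
  have hab : a * b = n := by
    have e1 : mu * (a*b) = (mu*a)*b := by ring
    rw [ha, hb] at e1
    have e2 : (k - 1)*(k+1) = mu * n := by
      obtain ⟨k', rfl⟩ : ∃ k', k = k'+1 := ⟨k-1, by omega⟩
      have h3 : (k'+1)*(k'+1) = k'*k' + 2*k' + 1 := by ring
      have h4 : (k'+1-1)*(k'+1+1) = k'*k' + 2*k' := by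
        simp only [Nat.add_sub_cancel]
        ring
      omega
    have e3 : a*(k+1) = n := Nat.eq_of_mul_eq_mul_left hmupos (e1.trans e2)
    rw [hb]; exact e3
  have hba : b * a = n := by rw [Nat.mul_comm]; exact hab
  have ha1 : 1 ≤ a := by
    rcases Nat.eq_zero_or_pos a with h | h
    · subst h; simp at hab; omega
    · exact h
  have hkn : k < n := by
    have h1 : 1*b ≤ a*b := Nat.mul_le_mul_right b ha1
    omega
  have hn0 : 0 < n := by omega
  have hb0 : 0 < b := by omega
  -- ZMod facts
  have hzn : ((n:ℕ) : ZMod n) = 0 := ZMod.natCast_self n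
  have hkk : (k:ZMod n) * (k:ZMod n) = 1 := by
    calc (k:ZMod n)*(k:ZMod n) = ((k*k:ℕ):ZMod n) := by push_cast; ring
    _ = ((mu*n+1:ℕ):ZMod n) := by rw [hsq]
    _ = (mu:ZMod n)*((n:ℕ):ZMod n)+1 := by push_cast; ring
    _ = 1 := by rw [hzn]; ring
  have hkb : (k:ZMod n) * ((b:ℕ):ZMod n) = ((b:ℕ):ZMod n) := by
    have h1 : (k:ZMod n)*((b:ℕ):ZMod n) = (k:ZMod n)*(k:ZMod n) + (k:ZMod n) := by
      rw [hb]; push_cast; ring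
    rw [h1, hkk, hb]; push_cast; ring
  have hkinv : ∀ x y : ZMod n, (k:ZMod n)*x = y ↔ x = (k:ZMod n)*y := by
    intro x y
    constructor
    · intro h; rw [← h, ← mul_assoc, hkk, one_mul]
    · intro h; rw [h, ← mul_assoc, hkk, one_mul]
  have hkbi : ∀ m:ℕ, (k:ZMod n) * ((b*m:ℕ):ZMod n) = ((b*m:ℕ):ZMod n) := by
    intro m
    push_cast
    rw [← mul_assoc]
    push_cast at hkb
    rw [hkb]
  -- cast of s in [1,k] is never a multiple of b
  have hscast : ∀ s m : ℕ, 1 ≤ s → s ≤ k → ((s:ℕ):ZMod n) ≠ ((b*m : ℕ):ZMod n) := by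
    intro s m h1 h2 heq
    have hv1 : ((s:ℕ):ZMod n).val = s := ZMod.val_natCast_of_lt (by omega)
    have hv2 : ((b*m:ℕ):ZMod n).val = b * (m % a) := by
      rw [ZMod.val_natCast, ← hba, Nat.mul_mod_mul_left]
    rw [heq, hv2] at hv1
    rcases Nat.eq_zero_or_pos (m % a) with h | h
    · rw [h] at hv1; omega
    · have : b*1 ≤ b*(m % a) := Nat.mul_le_mul_left b h
      omega
  -- membership characterization
  have hmem : ∀ (v : ZMod n) (i : ℕ), v ∈ jorgensenCell n k b i ↔
      ((k:ZMod n)*v = ((b*i:ℕ):ZMod n) ∨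
        ∃ s:ℕ, 1 ≤ s ∧ s ≤ k ∧ (k:ZMod n)*v + ((b*i:ℕ):ZMod n) = ((s:ℕ):ZMod n)) := by
    intro v i
    simp only [jorgensenCell, Set.mem_union, Set.mem_singleton_iff, Set.mem_setOf_eq]
    constructor
    · rintro (rfl | ⟨s, h1, h2, rfl⟩)
      · exact Or.inl (hkbi i)
      · refine Or.inr ⟨s, h1, h2, ?_⟩
        rw [← mul_assoc, hkk, one_mul, sub_add_cancel]
    · rintro (h | ⟨s, h1, h2, h3⟩)
      · left
        rw [(hkinv v _).mp h, hkbi]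
      · right
        refine ⟨s, h1, h2, ?_⟩
        have h4 : (k:ZMod n)*v = ((s:ℕ):ZMod n) - ((b*i:ℕ):ZMod n) := by
          rw [← h3]; ring
        exact (hkinv v _).mp h4
  -- classification
  have hclass : ∀ v : ZMod n, ∃! i : ℕ, i < a ∧ v ∈ jorgensenCell n k b i := by
    intro v
    set c := ((k:ZMod n)*v).val with hcdef
    have hcn : c < n := ZMod.val_lt _
    have hkvc : (k:ZMod n)*v = ((c:ℕ):ZMod n) := (ZMod.natCast_zmod_val _).symm
    obtain ⟨q, r, hdm, hrb⟩ : ∃ q r, b*q + r = c ∧ r < b :=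
      ⟨c/b, c%b, Nat.div_add_mod c b, Nat.mod_lt _ hb0⟩
    have hqa : q < a := by
      have h1 : b*q < b*a := by omega
      exact Nat.lt_of_mul_lt_mul_left h1
    have hvbm : ∀ m:ℕ, m < a → ((b*m:ℕ):ZMod n).val = b*m := by
      intro m hm
      apply ZMod.val_natCast_of_lt
      have h1 : b*(m+1) ≤ b*a := Nat.mul_le_mul_left b hm
      have h2 : b*(m+1) = b*m + b := by ring
      omega
    rcases Nat.eq_zero_or_pos r with hr0 | hr0
    · -- r = 0 : c = b*q, v is in cell q only
      have hcq : c = b*q := by omega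
      refine ⟨q, ⟨hqa, ?_⟩, ?_⟩
      · rw [hmem]
        left
        rw [hkvc, hcq]
      · rintro i ⟨hia, hvi⟩
        rw [hmem] at hvi
        rcases hvi with h | ⟨s, h1, h2, h3⟩
        · rw [hkvc] at h
          have h4 : ((c:ℕ):ZMod n).val = ((b*i:ℕ):ZMod n).val := by rw [h]
          rw [hvbm i hia, ZMod.val_natCast_of_lt hcn] at h4
          have hbq : b*i = b*q := by omega
          exact Nat.eq_of_mul_eq_mul_left hb0 hbq
        · exfalso
          rw [hkvc] at h3
          have h4 : ((c:ℕ):ZMod n) + ((b*i:ℕ):ZMod n) = ((b*(q+i):ℕ):ZMod n) := by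
            rw [hcq]; push_cast; ring
          rw [h4] at h3
          exact hscast s (q+i) h1 h2 h3.symm
    · -- r ≥ 1
      set i0 := if q = 0 then 0 else a - q with hi0def
      have hi0a : i0 < a := by rw [hi0def]; split <;> omega
      have hqi0 : q + i0 = 0 ∨ q + i0 = a := by rw [hi0def]; split <;> omega
      have hkey : (k:ZMod n)*v + ((b*i0:ℕ):ZMod n) = ((r:ℕ):ZMod n) := by
        rw [hkvc]
        have h4 : ((c:ℕ):ZMod n) + ((b*i0:ℕ):ZMod n) = ((c + b*i0:ℕ):ZMod n) := by
          push_cast; ring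
        rw [h4]
        have h5 : b*(q+i0) = b*q + b*i0 := by ring
        rcases hqi0 with h | h
        · rw [h, Nat.mul_zero] at h5
          have h6 : c + b*i0 = r := by omega
          rw [h6]
        · rw [h, hba] at h5
          have h6 : c + b*i0 = n + r := by omega
          rw [h6]
          push_cast
          rw [hzn]
          ring
      refine ⟨i0, ⟨hi0a, ?_⟩, ?_⟩
      · rw [hmem]
        exact Or.inr ⟨r, hr0, by omega, hkey⟩
      · rintro i ⟨hia, hvi⟩
        rw [hmem] at hvi
        rcases hvi with h | ⟨s, h1, h2, h3⟩
        · exfalso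
          rw [hkvc] at h
          have h4 : ((c:ℕ):ZMod n).val = ((b*i:ℕ):ZMod n).val := by rw [h]
          rw [hvbm i hia, ZMod.val_natCast_of_lt hcn] at h4
          have hqi : q ≤ i := by
            have h5 : b*q ≤ b*i := by omega
            exact Nat.le_of_mul_le_mul_left h5 hb0
          have hiq : i < q + 1 := by
            have h5 : b*(q+1) = b*q + b := by ring
            have h6 : b*i < b*(q+1) := by omega
            exact Nat.lt_of_mul_lt_mul_left h6
          have hiq2 : i = q := by omega
          rw [hiq2] at h4
          omega
        · -- s = (c + b*i) % n
          rw [hkvc] at h3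
          have hs' : ((s:ℕ):ZMod n) = ((c + b*i : ℕ):ZMod n) := by
            rw [← h3]; push_cast; ring
          have hval : s % n = (c + b*i) % n := by
            have h4 := congrArg ZMod.val hs'
            rwa [ZMod.val_natCast, ZMod.val_natCast] at h4
          have hsn : s % n = s := Nat.mod_eq_of_lt (by omega)
          have h5 : b*(q+i) = b*q + b*i := by ring
          rcases Nat.lt_or_ge (q+i) a with h | h
          · have h1' : b*(q+i+1) ≤ b*a := Nat.mul_le_mul_left b h
            have h2' : b*(q+i+1) = b*(q+i) + b := by ring
            have hlt : b*(q+i) + r < n := by omega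
            have h6 : c + b*i = b*(q+i) + r := by omega
            have heqs : s = b*(q+i) + r := by
              rw [h6, Nat.mod_eq_of_lt hlt] at hval
              omega
            have hzero : q + i = 0 := by
              by_contra hne
              have h7 : b*1 ≤ b*(q+i) := Nat.mul_le_mul_left b (by omega)
              omega
            have : i0 = 0 := by rw [hi0def, if_pos (by omega)]
            omega
          · have h8 : q+i-a < a := by omega
            have h9 : b*(q+i) = b*a + b*(q+i-a) := by
              have h9' : q+i = a + (q+i-a) := by omega
              conv_lhs => rw [h9']
              ring
            have h1' : b*(q+i-a+1) ≤ b*a := Nat.mul_le_mul_left b (by omega)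
            have h2' : b*(q+i-a+1) = b*(q+i-a) + b := by ring
            have hlt : b*(q+i-a) + r < n := by omega
            have h6 : c + b*i = n + (b*(q+i-a) + r) := by omega
            have heqs : s = b*(q+i-a) + r := by
              rw [h6, Nat.add_mod_left, Nat.mod_eq_of_lt hlt] at hval
              omega
            have hzero : q + i - a = 0 := by
              by_contra hne
              have h7 : b*1 ≤ b*(q+i-a) := Nat.mul_le_mul_left b (by omega)
              omega
            have hq1 : 1 ≤ q := by omega
            rw [hi0def, if_neg (by omega)]
            omega
  -- cardinality of the cells
  have hcard : ∀ i : ℕ, i < a → (jorgensenCell n k b i).ncard = b := by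
    intro i hia
    set g : ℕ → ZMod n := fun s => if s = 0 then ((b*i:ℕ):ZMod n)
      else (k:ZMod n)*(((s:ℕ):ZMod n) - ((b*i:ℕ):ZMod n)) with hgdef
    have hset : jorgensenCell n k b i = ↑((Finset.range (k+1)).image g) := by
      ext x
      simp only [jorgensenCell, Set.mem_union, Set.mem_singleton_iff, Set.mem_setOf_eq,
        Finset.coe_image, Set.mem_image, Finset.mem_coe, Finset.mem_range]
      constructor
      · rintro (rfl | ⟨s, h1, h2, rfl⟩)
        · exact ⟨0, by omega, by simp [hgdef]⟩
        · exact ⟨s, by omega, by simp only [hgdef]; rw [if_neg (by omega)]⟩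
      · rintro ⟨s, hs, rfl⟩
        simp only [hgdef]
        split
        · exact Or.inl rfl
        · exact Or.inr ⟨s, by omega, by omega, rfl⟩
    rw [hset, Set.ncard_coe_finset, Finset.card_image_of_injOn, Finset.card_range, hb]
    intro s hs t ht hst
    simp only [Finset.coe_range, Set.mem_Iio] at hs ht
    have hcast_ne : ∀ u : ℕ, 1 ≤ u → u ≤ k →
        ((b*i:ℕ):ZMod n) ≠ (k:ZMod n)*(((u:ℕ):ZMod n) - ((b*i:ℕ):ZMod n)) := by
      intro u hu1 hu2 hequ
      have h1 : (k:ZMod n)*((b*i:ℕ):ZMod n)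
          = (k:ZMod n)*((k:ZMod n)*(((u:ℕ):ZMod n) - ((b*i:ℕ):ZMod n))) := by rw [← hequ]
      rw [hkbi, ← mul_assoc, hkk, one_mul] at h1
      have h2 : ((u:ℕ):ZMod n) = ((b*(2*i):ℕ):ZMod n) := by
        have h3 : ((u:ℕ):ZMod n) = ((b*i:ℕ):ZMod n) + ((b*i:ℕ):ZMod n) := by
          linear_combination -h1
        rw [h3]; push_cast; ring
      exact hscast u (2*i) hu1 hu2 h2
    rcases Nat.eq_zero_or_pos s with hs0 | hs0 <;> rcases Nat.eq_zero_or_pos t with ht0 | ht0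
    · omega
    · exfalso
      rw [hgdef] at hst
      simp only [hs0, if_pos, if_neg (by omega : ¬ t = 0)] at hst
      exact hcast_ne t ht0 (by omega) hst
    · exfalso
      rw [hgdef] at hst
      simp only [ht0, if_pos, if_neg (by omega : ¬ s = 0)] at hst
      exact hcast_ne s hs0 (by omega) hst.symm
    · rw [hgdef] at hst
      simp only [if_neg (by omega : ¬ s = 0), if_neg (by omega : ¬ t = 0)] at hst
      have h1 : (k:ZMod n)*((k:ZMod n)*(((s:ℕ):ZMod n) - ((b*i:ℕ):ZMod n)))
          = (k:ZMod n)*((k:ZMod n)*(((t:ℕ):ZMod n) - ((b*i:ℕ):ZMod n))) := by rw [hst]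
      rw [← mul_assoc, hkk, one_mul, ← mul_assoc, hkk, one_mul] at h1
      have h2 : ((s:ℕ):ZMod n) = ((t:ℕ):ZMod n) := by
        have := congrArg (· + ((b*i:ℕ):ZMod n)) h1
        simpa [sub_add_cancel] using this
      have h3 := congrArg ZMod.val h2
      rw [ZMod.val_natCast_of_lt (by omega), ZMod.val_natCast_of_lt (by omega)] at h3
      exact h3
  refine ⟨hclass, hcard, ?_⟩
  -- the counting statement
  intro i j hia hja v hv
  set T := (Finset.Icc 1 k).filter
      (fun s : ℕ => ((s:ℕ):ZMod n) - (k:ZMod n)*v ∈ jorgensenCell n k b i) with hTdef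
  have hsetT : {x : ZMod n | x ∈ jorgensenCell n k b i ∧ jorgensenDart n k x v}
      = ↑(T.image (fun s : ℕ => ((s:ℕ):ZMod n) - (k:ZMod n)*v)) := by
    ext x
    simp only [Set.mem_setOf_eq, Finset.coe_image, Set.mem_image, Finset.mem_coe,
      hTdef, Finset.mem_filter, Finset.mem_Icc, jorgensenDart]
    constructor
    · rintro ⟨hx, s, h1, h2, h3⟩
      have hx' : x = ((s:ℕ):ZMod n) - (k:ZMod n)*v := by rw [← h3]; ring
      exact ⟨s, ⟨⟨h1, h2⟩, by rw [← hx']; exact hx⟩, hx'.symm⟩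
    · rintro ⟨s, ⟨⟨h1, h2⟩, hmem'⟩, rfl⟩
      exact ⟨hmem', s, h1, h2, by ring⟩
  rw [hsetT, Set.ncard_coe_finset, Finset.card_image_of_injOn]
  swap
  · intro s hs t ht hst
    simp only [hTdef, Finset.coe_filter, Set.mem_setOf_eq, Finset.mem_Icc] at hs ht
    have h2 : ((s:ℕ):ZMod n) = ((t:ℕ):ZMod n) := by
      have := congrArg (· + (k:ZMod n)*v) hst
      simpa [sub_add_cancel] using this
    have h3 := congrArg ZMod.val h2
    rw [ZMod.val_natCast_of_lt (by omega), ZMod.val_natCast_of_lt (by omega)] at h3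
    exact h3
  -- split the filter
  have hTsplit : T = ((Finset.Icc 1 k).filter
        (fun s : ℕ => ((s:ℕ):ZMod n) = (k:ZMod n)*v + ((b*i:ℕ):ZMod n)))
      ∪ ((Finset.Icc 1 k).filter (fun s : ℕ => ∃ t:ℕ, 1 ≤ t ∧ t ≤ k ∧
          (t:ZMod n) = (k:ZMod n)*((s:ℕ):ZMod n) + (((b*i:ℕ):ZMod n) - v))) := by
    rw [hTdef, ← Finset.filter_or]
    apply Finset.filter_congr
    intro s hs
    simp only [Finset.mem_Icc] at hs
    rw [hmem]
    have hmul : (k:ZMod n)*(((s:ℕ):ZMod n) - (k:ZMod n)*v)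
        = (k:ZMod n)*((s:ℕ):ZMod n) - v := by
      rw [mul_sub, ← mul_assoc, hkk, one_mul]
    constructor
    · rintro (h | ⟨t, h1, h2, h3⟩)
      · left
        rw [hmul] at h
        have h4 : (k:ZMod n)*((s:ℕ):ZMod n) = v + ((b*i:ℕ):ZMod n) := by
          rw [← h]; ring
        have h5 := (hkinv _ _).mp h4
        rw [mul_add, hkbi] at h5
        exact h5
      · right
        refine ⟨t, h1, h2, ?_⟩
        rw [hmul] at h3
        rw [← h3]; ring
    · rintro (h | ⟨t, h1, h2, h3⟩)
      · left
        have h4 : (k:ZMod n)*((s:ℕ):ZMod n) = v + ((b*i:ℕ):ZMod n) := by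
          rw [h, mul_add, ← mul_assoc, hkk, one_mul, hkbi]
        rw [hmul, h4]; ring
      · right
        refine ⟨t, h1, h2, ?_⟩
        rw [hmul, h3]; ring
  have hdisj : Disjoint ((Finset.Icc 1 k).filter
        (fun s : ℕ => ((s:ℕ):ZMod n) = (k:ZMod n)*v + ((b*i:ℕ):ZMod n)))
      ((Finset.Icc 1 k).filter (fun s : ℕ => ∃ t:ℕ, 1 ≤ t ∧ t ≤ k ∧
          (t:ZMod n) = (k:ZMod n)*((s:ℕ):ZMod n) + (((b*i:ℕ):ZMod n) - v))) := by
    rw [Finset.disjoint_left]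
    rintro s hsA hsB
    simp only [Finset.mem_filter, Finset.mem_Icc] at hsA hsB
    obtain ⟨-, hA⟩ := hsA
    obtain ⟨-, t, h1, h2, h3⟩ := hsB
    have h4 : (t:ZMod n) = ((b*(2*i):ℕ):ZMod n) := by
      rw [h3, hA, mul_add, ← mul_assoc, hkk, one_mul, hkbi]
      push_cast
      ring
    exact hscast t (2*i) h1 h2 h4
  rw [hTsplit, Finset.card_union_of_disjoint hdisj]
  -- card of the B part via lemF
  rw [jorg_lemF n k mu (by omega) hkn hsq (((b*i:ℕ):ZMod n) - v)]
  -- card of the A part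
  set X := (k:ZMod n)*v + ((b*i:ℕ):ZMod n) with hXdef
  have hcardA : ((Finset.Icc 1 k).filter (fun s : ℕ => ((s:ℕ):ZMod n) = X)).card
      = if X.val ∈ Finset.Icc 1 k then 1 else 0 := by
    have hcong : (Finset.Icc 1 k).filter (fun s : ℕ => ((s:ℕ):ZMod n) = X)
        = (Finset.Icc 1 k).filter (fun s : ℕ => s = X.val) := by
      apply Finset.filter_congr
      intro s hs
      simp only [Finset.mem_Icc] at hs
      constructor
      · intro h; rw [← h, ZMod.val_natCast_of_lt (by omega)]
      · intro h; rw [h, ZMod.natCast_zmod_val]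
    rw [hcong, Finset.filter_eq']
    split <;> simp
  rw [hcardA]
  -- final case analysis
  rcases (hmem v j).mp hv with hvj | ⟨s0, hs01, hs02, hs03⟩
  · -- v is the special vertex b*j
    have hvspec : v = ((b*j:ℕ):ZMod n) := by
      rw [(hkinv v _).mp hvj, hkbi]
    rcases eq_or_ne i j with rfl | hij
    · -- same cell : A contributes 0, B contributes 1
      have hA0 : ¬ (X.val ∈ Finset.Icc 1 k) := by
        intro hmemX
        simp only [Finset.mem_Icc] at hmemX
        apply hscast X.val (2*i) hmemX.1 hmemX.2
        rw [ZMod.natCast_zmod_val, hXdef, hvj]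
        push_cast
        ring
      have hB1 : ((b*i:ℕ):ZMod n) - v = 0 := by
        rw [hvspec, sub_self]
      rw [if_neg hA0, if_pos hB1, if_pos rfl]
      ring
    · -- different cells : both contribute 0
      have hvnoti : v ∉ jorgensenCell n k b i := by
        intro hvi
        exact hij ((hclass v).unique ⟨hia, hvi⟩ ⟨hja, hv⟩)
      have hA0 : ¬ (X.val ∈ Finset.Icc 1 k) := by
        intro hmemX
        simp only [Finset.mem_Icc] at hmemX
        apply hvnoti
        rw [hmem]
        exact Or.inr ⟨X.val, hmemX.1, hmemX.2, by rw [ZMod.natCast_zmod_val]⟩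
      have hB0 : ¬ (((b*i:ℕ):ZMod n) - v = 0) := by
        intro h0
        apply hvnoti
        rw [hmem]
        left
        rw [sub_eq_zero] at h0
        rw [← h0, hkbi]
      rw [if_neg hA0, if_neg hB0, if_neg hij]
      ring
  · -- v is a non-special vertex of cell j
    rcases eq_or_ne i j with rfl | hij
    · -- same cell : A contributes 1, B contributes 0
      have hA1 : X.val ∈ Finset.Icc 1 k := by
        have hXs : X = ((s0:ℕ):ZMod n) := by rw [hXdef, hs03]
        rw [hXs, ZMod.val_natCast_of_lt (by omega)]
        simp only [Finset.mem_Icc]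
        omega
      have hB0 : ¬ (((b*i:ℕ):ZMod n) - v = 0) := by
        intro h0
        rw [sub_eq_zero] at h0
        apply hscast s0 (2*i) hs01 hs02
        rw [← hs03, ← h0, hkbi]
        push_cast
        ring
      rw [if_pos hA1, if_neg hB0, if_pos rfl]
      ring
    · -- different cells : both contribute 0
      have hvnoti : v ∉ jorgensenCell n k b i := by
        intro hvi
        exact hij ((hclass v).unique ⟨hia, hvi⟩ ⟨hja, hv⟩)
      have hA0 : ¬ (X.val ∈ Finset.Icc 1 k) := by
        intro hmemX
        simp only [Finset.mem_Icc] at hmemX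
        apply hvnoti
        rw [hmem]
        exact Or.inr ⟨X.val, hmemX.1, hmemX.2, by rw [ZMod.natCast_zmod_val]⟩
      have hB0 : ¬ (((b*i:ℕ):ZMod n) - v = 0) := by
        intro h0
        apply hvnoti
        rw [hmem]
        left
        rw [sub_eq_zero] at h0
        rw [← h0, hkbi]
      rw [if_neg hA0, if_neg hB0, if_neg hij]
      ring
end
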